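/- Let f̂_{(δ−α)+kδ}, f̂_{(δ−β)+kδ}, f̂_{(δ−α−β)+kδ} ∈ Mat₃(ℂ) be defined by the recursions f̂_{(δ−γ)+kδ} = [2]_q⁻¹(f̂_{(δ−γ)+(k−1)δ}f̂'_{δ,γ} − f̂'_{δ,γ}f̂_{(δ−γ)+(k−1)δ}) for k ≥ 1 and γ ∈ {α, β, α+β}, with initial values f̂_{δ−α}, f̂_{δ−β}, f̂_{δ−α−β}. Then for all integers k ≥ 0: f̂_{(δ−α)+kδ} = (−1)^k q^{2k+1} E₁₂, f̂_{(δ−β)+kδ} = −q^{3k+2} E₂₃, and f̂_{(δ−α−β)+kδ} = (−1)^k q^{2k+1} E₁₃. (These are the matrices φ^{(1,0,0)}(f_{(δ−γ)+kδ}) of the affine root vectors in the vector evaluation representation of U_q(L(sl₃)).) -/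

import Mathlib

open Matrix

/-- Matrix unit `E_{ab}` in `Mat₃(ℂ)`. -/
noncomputable def matE (a b : Fin 3) : Matrix (Fin 3) (Fin 3) ℂ :=
  Matrix.single a b 1

/-- `f̂_α = E₂₁`. -/
noncomputable def fhatα : Matrix (Fin 3) (Fin 3) ℂ := matE 1 0

/-- `f̂_β = E₃₂`. -/
noncomputable def fhatβ : Matrix (Fin 3) (Fin 3) ℂ := matE 2 1

/-- `f̂_{δ−α−β} = qE₁₃`. -/
noncomputable def fhatδαβ (q : ℂ) : Matrix (Fin 3) (Fin 3) ℂ := q • matE 0 2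

/-- `f̂_{α+β} = f̂_β f̂_α − q f̂_α f̂_β`. -/
noncomputable def fhatαβ (q : ℂ) : Matrix (Fin 3) (Fin 3) ℂ :=
  fhatβ * fhatα - q • (fhatα * fhatβ)

/-- `f̂_{δ−α} = f̂_{δ−α−β} f̂_β − q f̂_β f̂_{δ−α−β}`. -/
noncomputable def fhatδα (q : ℂ) : Matrix (Fin 3) (Fin 3) ℂ :=
  fhatδαβ q * fhatβ - q • (fhatβ * fhatδαβ q)

/-- `f̂_{δ−β} = f̂_{δ−α−β} f̂_α − q f̂_α f̂_{δ−α−β}`. -/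
noncomputable def fhatδβ (q : ℂ) : Matrix (Fin 3) (Fin 3) ℂ :=
  fhatδαβ q * fhatα - q • (fhatα * fhatδαβ q)

/-- `f̂'_{δ,α} = f̂_{δ−α} f̂_α − q² f̂_α f̂_{δ−α}`. -/
noncomputable def fhatδ'α (q : ℂ) : Matrix (Fin 3) (Fin 3) ℂ :=
  fhatδα q * fhatα - (q ^ 2) • (fhatα * fhatδα q)

/-- `f̂'_{δ,β} = f̂_{δ−β} f̂_β − q² f̂_β f̂_{δ−β}`. -/
noncomputable def fhatδ'β (q : ℂ) : Matrix (Fin 3) (Fin 3) ℂ :=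
  fhatδβ q * fhatβ - (q ^ 2) • (fhatβ * fhatδβ q)

/-- `f̂'_{δ,α+β} = f̂_{δ−α−β} f̂_{α+β} − q² f̂_{α+β} f̂_{δ−α−β}`. -/
noncomputable def fhatδ'αβ (q : ℂ) : Matrix (Fin 3) (Fin 3) ℂ :=
  fhatδαβ q * fhatαβ q - (q ^ 2) • (fhatαβ q * fhatδαβ q)

/-- `f̂_{(δ−α)+kδ}`, via the recursion
`f̂_{(δ−γ)+kδ} = [2]_q⁻¹ (f̂_{(δ−γ)+(k−1)δ} f̂'_{δ,γ} − f̂'_{δ,γ} f̂_{(δ−γ)+(k−1)δ})`. -/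
noncomputable def fhatδαk (q : ℂ) : ℕ → Matrix (Fin 3) (Fin 3) ℂ
  | 0 => fhatδα q
  | k + 1 => (q + q⁻¹)⁻¹ • (fhatδαk q k * fhatδ'α q - fhatδ'α q * fhatδαk q k)

/-- `f̂_{(δ−β)+kδ}`. -/
noncomputable def fhatδβk (q : ℂ) : ℕ → Matrix (Fin 3) (Fin 3) ℂ
  | 0 => fhatδβ q
  | k + 1 => (q + q⁻¹)⁻¹ • (fhatδβk q k * fhatδ'β q - fhatδ'β q * fhatδβk q k)

/-- `f̂_{(δ−α−β)+kδ}`. -/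
noncomputable def fhatδαβk (q : ℂ) : ℕ → Matrix (Fin 3) (Fin 3) ℂ
  | 0 => fhatδαβ q
  | k + 1 => (q + q⁻¹)⁻¹ • (fhatδαβk q k * fhatδ'αβ q - fhatδ'αβ q * fhatδαβk q k)


lemma qinv_ne {q : ℂ} (hq0 : q ≠ 0) (hq2' : q ^ 2 ≠ -1) : q + q⁻¹ ≠ 0 := by
  intro h
  apply hq2'
  have := congrArg (fun z => z * q) h
  field_simp at this
  linear_combination this

lemma stepα {q : ℂ} (hq0 : q ≠ 0) (hq2' : q ^ 2 ≠ -1) (c : ℂ) :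
    (q + q⁻¹)⁻¹ • ((c • matE 0 1) * fhatδ'α q - fhatδ'α q * (c • matE 0 1))
      = (-(q ^ 2) * c) • matE 0 1 := by
  have hne := qinv_ne hq0 hq2'
  have h12 : (1 : ℂ) + q ^ 2 ≠ 0 := fun h => hq2' (by linear_combination h)
  ext i j
  fin_cases i <;> fin_cases j <;>
    simp [fhatδ'α, fhatδα, fhatδαβ, fhatα, fhatβ, matE, Matrix.mul_apply,
      Fin.sum_univ_three, Matrix.single, Matrix.smul_apply, Matrix.sub_apply] <;>
    field_simp <;> linear_combination (-c) * mul_inv_cancel₀ h12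

lemma stepβ {q : ℂ} (hq0 : q ≠ 0) (hq2' : q ^ 2 ≠ -1) (c : ℂ) :
    (q + q⁻¹)⁻¹ • ((c • matE 1 2) * fhatδ'β q - fhatδ'β q * (c • matE 1 2))
      = (q ^ 3 * c) • matE 1 2 := by
  have hne := qinv_ne hq0 hq2'
  have h12 : (1 : ℂ) + q ^ 2 ≠ 0 := fun h => hq2' (by linear_combination h)
  ext i j
  fin_cases i <;> fin_cases j <;>
    simp [fhatδ'β, fhatδβ, fhatδαβ, fhatα, fhatβ, matE, Matrix.mul_apply,
      Fin.sum_univ_three, Matrix.single, Matrix.smul_apply, Matrix.sub_apply] <;>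
    field_simp <;> linear_combination c * mul_inv_cancel₀ h12

lemma stepαβ {q : ℂ} (hq0 : q ≠ 0) (hq2' : q ^ 2 ≠ -1) (c : ℂ) :
    (q + q⁻¹)⁻¹ • ((c • matE 0 2) * fhatδ'αβ q - fhatδ'αβ q * (c • matE 0 2))
      = (-(q ^ 2) * c) • matE 0 2 := by
  have hne := qinv_ne hq0 hq2'
  have h12 : (1 : ℂ) + q ^ 2 ≠ 0 := fun h => hq2' (by linear_combination h)
  ext i j
  fin_cases i <;> fin_cases j <;>
    simp [fhatδ'αβ, fhatαβ, fhatδαβ, fhatα, fhatβ, matE, Matrix.mul_apply,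
      Fin.sum_univ_three, Matrix.single, Matrix.smul_apply, Matrix.sub_apply] <;>
    field_simp <;> linear_combination (-c) * mul_inv_cancel₀ h12

lemma base_α (q : ℂ) : fhatδα q = q • matE 0 1 := by
  ext i j
  fin_cases i <;> fin_cases j <;>
    simp [fhatδα, fhatδαβ, fhatβ, matE, Matrix.mul_apply,
      Fin.sum_univ_three, Matrix.single, Matrix.smul_apply, Matrix.sub_apply]

lemma base_β (q : ℂ) : fhatδβ q = (-(q ^ 2)) • matE 1 2 := by
  ext i j
  fin_cases i <;> fin_cases j <;>
    simp [fhatδβ, fhatδαβ, fhatα, matE, Matrix.mul_apply,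
      Fin.sum_univ_three, Matrix.single, Matrix.smul_apply, Matrix.sub_apply] <;>
    ring

/-- Closed formulas for the affine root vectors `f_{(δ−γ)+kδ}`, `γ ∈ {α, β, α+β}`,
in the vector evaluation representation of `U_q(L(sl₃))`. -/
theorem affine_root_vectors_vector_rep_delta_minus
    (q : ℂ) (hq0 : q ≠ 0) (hq2 : q ^ 2 ≠ 1) (hq2' : q ^ 2 ≠ -1) :
    ∀ k : ℕ,
      fhatδαk q k = ((-1 : ℂ) ^ k * q ^ (2 * k + 1)) • matE 0 1 ∧
      fhatδβk q k = (-(q ^ (3 * k + 2)) : ℂ) • matE 1 2 ∧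
      fhatδαβk q k = ((-1 : ℂ) ^ k * q ^ (2 * k + 1)) • matE 0 2 := by

  intro k
  induction k with
  | zero =>
    refine ⟨?_, ?_, ?_⟩
    · rw [fhatδαk, base_α]; norm_num
    · rw [fhatδβk, base_β]
    · rw [fhatδαβk, fhatδαβ]; norm_num
  | succ k ih =>
    obtain ⟨h1, h2, h3⟩ := ih
    refine ⟨?_, ?_, ?_⟩
    · rw [fhatδαk, h1, stepα hq0 hq2']
      congr 1
      ring
    · rw [fhatδβk, h2, stepβ hq0 hq2']
      congr 1
      ring
    · rw [fhatδαβk, h3, stepαβ hq0 hq2']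
      congr 1
      ring
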